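/- The vector ν(k) = 1/(n-1) for k ∈ {1,...,n-1} satisfies the eigenvalue equation λ ν(k) = ν(k)·(k(k-1)+(n-k)(n-k-1))/(n(n-1)) + ν(k+1)·((k+1)(n-k-1))/(n(n-1)) + ν(k-1)·((n-k+1)(k-1))/(n(n-1)) with λ = 1 - 2/(n(n-1)), where ν(0) = ν(n) = 0. -/
import Mathlib


/-- The uniform probability vector on `{1,…,n-1}`, extended by zero. -/
noncomputable def uniformQSD (n : ℕ) (k : ℕ) : ℝ :=
  if 1 ≤ k ∧ k ≤ n - 1 then 1 / ((n : ℝ) - 1) else 0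

/-- The uniform vector `ν(k) = 1/(n-1)` on `{1,…,n-1}` (with `ν(0) = ν(n) = 0`) satisfies
the QSD eigenvalue equation for the 2-opinion voter model on the complete graph `K_n`
with eigenvalue `λ = 1 - 2/(n(n-1))`. -/
theorem uniform_satisfies_eigen_eq (n : ℕ) (hn : 3 ≤ n) :
    ∀ k : ℕ, 1 ≤ k → k ≤ n - 1 →
      (1 - 2 / ((n : ℝ) * ((n : ℝ) - 1))) * uniformQSD n k
        = uniformQSD n k * (((k : ℝ) * ((k : ℝ) - 1) + ((n : ℝ) - k) * ((n : ℝ) - k - 1))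
            / ((n : ℝ) * ((n : ℝ) - 1)))
          + uniformQSD n (k + 1) *
              ((((k : ℝ) + 1) * ((n : ℝ) - k - 1)) / ((n : ℝ) * ((n : ℝ) - 1)))
          + uniformQSD n (k - 1) *
              ((((n : ℝ) - k + 1) * ((k : ℝ) - 1)) / ((n : ℝ) * ((n : ℝ) - 1))) := by
  intro k hk1 hk2
  have hnR : (3 : ℝ) ≤ (n : ℝ) := by exact_mod_cast hn
  have hn0 : (n : ℝ) ≠ 0 := by linarith
  have hn1 : (n : ℝ) - 1 ≠ 0 := by linarith
  have hkR : (k : ℝ) ≤ (n : ℝ) - 1 := by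
    have : (k : ℝ) ≤ ((n - 1 : ℕ) : ℝ) := by exact_mod_cast hk2
    have hc : ((n - 1 : ℕ) : ℝ) = (n : ℝ) - 1 := by
      have : 1 ≤ n := by omega
      push_cast [this]; ring
    linarith [this, hc ▸ this]
  have hνk : uniformQSD n k = 1 / ((n : ℝ) - 1) := by
    simp [uniformQSD, hk1, hk2]
  by_cases hk2' : k ≤ n - 2
  · -- k + 1 ≤ n - 1
    have hν1 : uniformQSD n (k + 1) = 1 / ((n : ℝ) - 1) := by
      simp [uniformQSD, show k + 1 ≤ n - 1 by omega]
    by_cases hk1' : 2 ≤ k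
    · have hν2 : uniformQSD n (k - 1) = 1 / ((n : ℝ) - 1) := by
        simp [uniformQSD, show 1 ≤ k - 1 by omega, show k - 1 ≤ n - 1 by omega]
      rw [hνk, hν1, hν2]
      field_simp
      ring
    · -- k = 1
      have hk : k = 1 := by omega
      subst hk
      have hν2 : uniformQSD n 0 = 0 := by simp [uniformQSD]
      rw [hνk, hν1, hν2]
      push_cast
      field_simp
      ring
  · -- k = n - 1
    have hk : k = n - 1 := by omega
    have hkc : (k : ℝ) = (n : ℝ) - 1 := by
      subst hk; push_cast [show 1 ≤ n by omega]; ring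
    have hν1 : uniformQSD n (k + 1) = 0 := by
      simp [uniformQSD]; omega
    have hν2 : uniformQSD n (k - 1) = 1 / ((n : ℝ) - 1) := by
      simp [uniformQSD]; omega
    rw [hνk, hν1, hν2, hkc]
    field_simp
    ring
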